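/- arXiv:2104.01905 — 3 statements merged into one kernel-verified Lean document; each statement's English description precedes it below -/
import Mathlib

section
/- In a complete normed real algebra, if an element v satisfies v² = r·1 with r > 0, then exp(v) = cosh(√r)·1 + (sinh(√r)/√r)·v. -/
theorem exp_of_sq_eq_pos_scalar {A : Type*} [NormedRing A] [NormedAlgebra ℝ A]
    [CompleteSpace A] (v : A) (r : ℝ) (hr : 0 < r) (hv : v * v = r • (1 : A)) :
    NormedSpace.exp v =
      Real.cosh (Real.sqrt r) • (1 : A) + (Real.sinh (Real.sqrt r) / Real.sqrt r) • v := by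
  have hs0 : Real.sqrt r ≠ 0 := ne_of_gt (Real.sqrt_pos.mpr hr)
  have hsq : Real.sqrt r ^ 2 = r := Real.sq_sqrt hr.le
  have hpow : ∀ n : ℕ, v ^ (2 * n) = r ^ n • (1 : A) := by
    intro n
    rw [pow_mul, show v ^ 2 = r • (1 : A) by rw [sq, hv], smul_pow, one_pow]
  rw [NormedSpace.exp_eq_tsum (𝕂 := ℝ)]
  refine HasSum.tsum_eq ?_
  have hc := (Real.hasSum_cosh (Real.sqrt r)).smul_const (1 : A)
  have hsn := ((Real.hasSum_sinh (Real.sqrt r)).div_const (Real.sqrt r)).smul_const v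
  refine HasSum.even_add_odd ?_ ?_
  · convert hc using 2 with n
    rw [hpow, smul_smul]
    congr 1
    rw [pow_mul, hsq]
    field_simp
  · convert hsn using 2 with n
    rw [pow_succ, pow_mul, show v ^ 2 = r • (1 : A) by rw [sq, hv], smul_pow, one_pow,
      smul_mul_assoc, one_mul, smul_smul]
    congr 1
    rw [pow_succ, pow_mul, hsq]
    field_simp
end

section
/- In a complete normed real algebra, if an element v satisfies v² = -r·1 with r > 0, then exp(v) = cos(√r)·1 + (sin(√r)/√r)·v. -/
theorem exp_of_sq_eq_neg_scalar {A : Type*} [NormedRing A] [NormedAlgebra ℝ A]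
    [CompleteSpace A] (v : A) (r : ℝ) (hr : 0 < r) (hv : v * v = -(r • (1 : A))) :
    NormedSpace.exp v =
      Real.cos (Real.sqrt r) • (1 : A) + (Real.sin (Real.sqrt r) / Real.sqrt r) • v := by
  set s := Real.sqrt r with hsdef
  have hs0 : 0 < s := Real.sqrt_pos.mpr hr
  have hs2 : s ^ 2 = r := Real.sq_sqrt hr.le
  have heven : ∀ n : ℕ, v ^ (2 * n) = ((-1 : ℝ) ^ n * s ^ (2 * n)) • (1 : A) := by
    intro n
    rw [pow_mul, sq, hv]
    have : -(r • (1 : A)) = (-r) • (1 : A) := by rw [neg_smul]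
    rw [this, smul_pow, one_pow]
    congr 1
    rw [neg_pow, ← hs2, ← pow_mul]
  have hodd : ∀ n : ℕ, v ^ (2 * n + 1) = ((-1 : ℝ) ^ n * s ^ (2 * n)) • v := by
    intro n
    rw [pow_succ, heven, smul_mul_assoc, one_mul]
  rw [NormedSpace.exp_eq_tsum (𝕂 := ℝ)]
  refine HasSum.tsum_eq ?_
  have hc := (Real.hasSum_cos s).smul_const (1 : A)
  have hs' := ((Real.hasSum_sin s).div_const s).smul_const v
  refine HasSum.even_add_odd ?_ ?_
  · convert hc using 2 with n
    rw [heven, smul_smul]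
    congr 1
    field_simp
  · convert hs' using 2 with n
    rw [hodd, smul_smul]
    congr 1
    have : s ^ (2 * n + 1) = s ^ (2 * n) * s := pow_succ s (2 * n)
    field_simp [this]
    ring
end

section
/- For real numbers a₃, a₁₂, a₂, a₁₃, a₁, a₂₃: ((a₃−a₁₂)² + (a₂+a₁₃)² + (a₁−a₂₃)²)·((a₃+a₁₂)² + (a₂−a₁₃)² + (a₁+a₂₃)²) = (a_S + a_I)(a_S − a_I) = a_S² − a_I², where a_S = a₁²+a₂²+a₃²+a₁₂²+a₁₃²+a₂₃² and a_I = −2(a₃a₁₂ − a₂a₁₃ + a₁a₂₃). Hence this product vanishes iff a_S = a_I or a_S = −a_I. -/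
theorem det_factorization (a₁ a₂ a₃ a₁₂ a₁₃ a₂₃ : ℝ) :
    (((a₃ - a₁₂) ^ 2 + (a₂ + a₁₃) ^ 2 + (a₁ - a₂₃) ^ 2) *
        ((a₃ + a₁₂) ^ 2 + (a₂ - a₁₃) ^ 2 + (a₁ + a₂₃) ^ 2) =
      ((a₁ ^ 2 + a₂ ^ 2 + a₃ ^ 2 + a₁₂ ^ 2 + a₁₃ ^ 2 + a₂₃ ^ 2) +
          (-2 * (a₃ * a₁₂ - a₂ * a₁₃ + a₁ * a₂₃))) *
        ((a₁ ^ 2 + a₂ ^ 2 + a₃ ^ 2 + a₁₂ ^ 2 + a₁₃ ^ 2 + a₂₃ ^ 2) -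
          (-2 * (a₃ * a₁₂ - a₂ * a₁₃ + a₁ * a₂₃)))) ∧
    (((a₃ - a₁₂) ^ 2 + (a₂ + a₁₃) ^ 2 + (a₁ - a₂₃) ^ 2) *
        ((a₃ + a₁₂) ^ 2 + (a₂ - a₁₃) ^ 2 + (a₁ + a₂₃) ^ 2) =
      (a₁ ^ 2 + a₂ ^ 2 + a₃ ^ 2 + a₁₂ ^ 2 + a₁₃ ^ 2 + a₂₃ ^ 2) ^ 2 -
        (-2 * (a₃ * a₁₂ - a₂ * a₁₃ + a₁ * a₂₃)) ^ 2) ∧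
    (((a₃ - a₁₂) ^ 2 + (a₂ + a₁₃) ^ 2 + (a₁ - a₂₃) ^ 2) *
        ((a₃ + a₁₂) ^ 2 + (a₂ - a₁₃) ^ 2 + (a₁ + a₂₃) ^ 2) = 0 ↔
      a₁ ^ 2 + a₂ ^ 2 + a₃ ^ 2 + a₁₂ ^ 2 + a₁₃ ^ 2 + a₂₃ ^ 2 =
          -2 * (a₃ * a₁₂ - a₂ * a₁₃ + a₁ * a₂₃) ∨
        a₁ ^ 2 + a₂ ^ 2 + a₃ ^ 2 + a₁₂ ^ 2 + a₁₃ ^ 2 + a₂₃ ^ 2 =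
          -(-2 * (a₃ * a₁₂ - a₂ * a₁₃ + a₁ * a₂₃))) := by
  refine ⟨by ring, by ring, ?_⟩
  set S := a₁ ^ 2 + a₂ ^ 2 + a₃ ^ 2 + a₁₂ ^ 2 + a₁₃ ^ 2 + a₂₃ ^ 2 with hS
  set I := -2 * (a₃ * a₁₂ - a₂ * a₁₃ + a₁ * a₂₃) with hI
  have h : ((a₃ - a₁₂) ^ 2 + (a₂ + a₁₃) ^ 2 + (a₁ - a₂₃) ^ 2) *
      ((a₃ + a₁₂) ^ 2 + (a₂ - a₁₃) ^ 2 + (a₁ + a₂₃) ^ 2) = (S - I) * (S + I) := by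
    rw [hS, hI]; ring
  rw [h, mul_eq_zero, sub_eq_zero, add_eq_zero_iff_eq_neg]
end
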